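/- Let 𝔥 = 𝔥(m,ρ,s) be a smooth Hamiltonian density and suppose smooth fields (m,ρ,s) on a bounded domain Ω satisfy the open Lie-Poisson system: ∂_t m + £_{∂𝔥/∂m} m + ρ∇(∂𝔥/∂ρ) + s∇(∂𝔥/∂s) = b on Ω, ∂_t ρ + div(ρ ∂𝔥/∂m) = θ_ρ, ∂_t s + div(s ∂𝔥/∂m) = θ_s on Ω, with boundary conditions ((∂𝔥/∂m)·n) m = −J, ρ(∂𝔥/∂m)·n = −j_ρ, s(∂𝔥/∂m)·n = −j_s on ∂Ω. Then the total Hamiltonian h = ∫_Ω 𝔥(m,ρ,s) dx satisfies d/dt h = ∫_Ω ( b·∂𝔥/∂m + θ_ρ ∂𝔥/∂ρ + θ_s ∂𝔥/∂s ) dx + ∫_{∂Ω} ( J·∂𝔥/∂m + j_ρ ∂𝔥/∂ρ + j_s ∂𝔥/∂s ) da. -/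

import Mathlib

open scoped BigOperators
open MeasureTheory

noncomputable def pd {n : ℕ} (i : Fin n) (f : (Fin n → ℝ) → ℝ) (x : Fin n → ℝ) : ℝ :=
  fderiv ℝ f x (Pi.single i 1)

/-- `(∂𝔥/∂m)_i` of a Hamiltonian density `𝔥(m,ρ,s)` at `(mv, r, sv)`. -/
noncomputable def Dhm {n : ℕ} (H : (Fin n → ℝ) → ℝ → ℝ → ℝ)
    (mv : Fin n → ℝ) (r sv : ℝ) (i : Fin n) : ℝ :=
  fderiv ℝ (fun w => H w r sv) mv (Pi.single i 1)

/-- `∂𝔥/∂ρ` at `(mv, r, sv)`. -/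
noncomputable def Dhρ {n : ℕ} (H : (Fin n → ℝ) → ℝ → ℝ → ℝ)
    (mv : Fin n → ℝ) (r sv : ℝ) : ℝ :=
  deriv (fun r' => H mv r' sv) r

/-- `∂𝔥/∂s` at `(mv, r, sv)`. -/
noncomputable def Dhs {n : ℕ} (H : (Fin n → ℝ) → ℝ → ℝ → ℝ)
    (mv : Fin n → ℝ) (r sv : ℝ) : ℝ :=
  deriv (fun t => H mv r t) sv

/-!
Along the fields write `u = ∂𝔥/∂m`, `μ = ∂𝔥/∂ρ`, `T = ∂𝔥/∂s`. By the chain rule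
`∂ₜ𝔥 = ∂ₜm·u + μ ∂ₜρ + T ∂ₜs`; substituting the three equations, all transport terms
combine, by the product rule alone, into `-div((m·u + ρμ + sT) u)`, so that
`∂ₜ𝔥 = b·u + θ_ρ μ + θ_s T - div((m·u + ρμ + sT) u)` pointwise in `Ω`. Differentiating under
the integral sign and applying the divergence theorem leaves the normal flux
`(m·u + ρμ + sT)(u·n)` on `∂Ω`, which the boundary conditions turn into
`-(J·u + j_ρ μ + j_s T)`.
-/

theorem hasDerivAt_setIntegral_of_contDiff {E : Type*} [NormedAddCommGroup E] [NormedSpace ℝ E]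
    [MeasurableSpace E] [OpensMeasurableSpace E] {μ : Measure E} [IsFiniteMeasureOnCompacts μ]
    {f : ℝ × E → ℝ} (hf : ContDiff ℝ 1 f) {Ω : Set E} (hΩm : MeasurableSet Ω)
    (hΩc : IsCompact (closure Ω)) (t : ℝ) :
    HasDerivAt (fun τ => ∫ x in Ω, f (τ, x) ∂μ) (∫ x in Ω, deriv (fun τ => f (τ, x)) t ∂μ) t := by
  have hpartial : ∀ τ x, HasDerivAt (fun τ' => f (τ', x)) (fderiv ℝ f (τ, x) (1, 0)) τ :=
    fun τ x => ((hf.differentiable one_ne_zero _).hasFDerivAt).comp_hasDerivAt τ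
      ((hasDerivAt_id τ).prodMk (hasDerivAt_const τ x))
  have hf' : Continuous fun p => fderiv ℝ f p (1, 0) :=
    (hf.continuous_fderiv one_ne_zero).clm_apply continuous_const
  obtain ⟨C, hC⟩ := (isCompact_closedBall t 1 |>.prod hΩc).exists_bound_of_continuousOn
    hf'.continuousOn
  simp_rw [fun x => (hpartial t x).deriv]
  refine (hasDerivAt_integral_of_dominated_loc_of_deriv_le (Metric.ball_mem_nhds t one_pos)
    (bound := fun _ => C) (.of_forall fun τ => (hf.continuous.comp
      (Continuous.prodMk_right τ)).aestronglyMeasurable)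
    ((hf.continuous.comp (Continuous.prodMk_right t)).continuousOn.integrableOn_compact hΩc
      |>.mono_set subset_closure)
    (hf'.comp (Continuous.prodMk_right t)).aestronglyMeasurable ?_ ?_
    (.of_forall fun x τ _ => hpartial τ x)).2
  · filter_upwards [ae_restrict_mem hΩm] with x hx τ hτ
    exact hC (τ, x) ⟨Metric.ball_subset_closedBall hτ, subset_closure hx⟩
  · exact integrableOn_const (hΩc.measure_lt_top.trans_le' (measure_mono subset_closure)).ne

theorem ContinuousLinearMap.apply_pi_prod_prod_eq_sum {n : ℕ}
    (L : ((Fin n → ℝ) × ℝ × ℝ) →L[ℝ] ℝ) (v : Fin n → ℝ) (a c : ℝ) :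
    L (v, a, c) = (∑ i, v i * L (Pi.single i 1, 0, 0)) + a * L (0, 1, 0) + c * L (0, 0, 1) := by
  have hv : ((v, a, c) : (Fin n → ℝ) × ℝ × ℝ)
      = (∑ i, v i • ((Pi.single i 1, 0, 0) : (Fin n → ℝ) × ℝ × ℝ))
        + a • (0, 1, 0) + c • (0, 0, 1) := by
    ext <;> simp [Prod.fst_sum, Prod.snd_sum, Pi.single_apply]
  simp only [hv, map_add, map_sum, map_smul, smul_eq_mul]

section Partials

variable {n : ℕ} {H : (Fin n → ℝ) → ℝ → ℝ → ℝ} {mv : Fin n → ℝ} {r sv : ℝ}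

theorem Dhm_eq_fderiv
    (hH : DifferentiableAt ℝ (fun p : (Fin n → ℝ) × ℝ × ℝ => H p.1 p.2.1 p.2.2) (mv, r, sv))
    (i : Fin n) :
    Dhm H mv r sv i
      = fderiv ℝ (fun p : (Fin n → ℝ) × ℝ × ℝ => H p.1 p.2.1 p.2.2) (mv, r, sv)
          (Pi.single i 1, 0, 0) := by
  have h : HasFDerivAt (fun w => H w r sv) (_ : (Fin n → ℝ) →L[ℝ] ℝ) mv :=
    (hH.hasFDerivAt.comp mv (hasFDerivAt_prodMk_left (𝕜 := ℝ) mv (r, sv)) :)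
  rw [Dhm, h.fderiv]
  rfl

theorem Dhρ_eq_fderiv
    (hH : DifferentiableAt ℝ (fun p : (Fin n → ℝ) × ℝ × ℝ => H p.1 p.2.1 p.2.2) (mv, r, sv)) :
    Dhρ H mv r sv
      = fderiv ℝ (fun p : (Fin n → ℝ) × ℝ × ℝ => H p.1 p.2.1 p.2.2) (mv, r, sv) (0, 1, 0) :=
  ((hH.hasFDerivAt.comp_hasDerivAt r ((hasDerivAt_const r mv).prodMk
    ((hasDerivAt_id r).prodMk (hasDerivAt_const r sv))) :) :
    HasDerivAt (fun r' => H mv r' sv) _ r).deriv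

theorem Dhs_eq_fderiv
    (hH : DifferentiableAt ℝ (fun p : (Fin n → ℝ) × ℝ × ℝ => H p.1 p.2.1 p.2.2) (mv, r, sv)) :
    Dhs H mv r sv
      = fderiv ℝ (fun p : (Fin n → ℝ) × ℝ × ℝ => H p.1 p.2.1 p.2.2) (mv, r, sv) (0, 0, 1) :=
  ((hH.hasFDerivAt.comp_hasDerivAt sv ((hasDerivAt_const sv mv).prodMk
    ((hasDerivAt_const sv r).prodMk (hasDerivAt_id sv))) :) :
    HasDerivAt (fun sv' => H mv r sv') _ sv).deriv

theorem hasDerivAt_comp_of_partials {γm : ℝ → Fin n → ℝ} {γρ γs : ℝ → ℝ} {t : ℝ}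
    (hH : DifferentiableAt ℝ (fun p : (Fin n → ℝ) × ℝ × ℝ => H p.1 p.2.1 p.2.2)
      (γm t, γρ t, γs t))
    (hm : DifferentiableAt ℝ γm t) (hρ : DifferentiableAt ℝ γρ t)
    (hs : DifferentiableAt ℝ γs t) :
    HasDerivAt (fun τ => H (γm τ) (γρ τ) (γs τ))
      ((∑ i, deriv (fun τ => γm τ i) t * Dhm H (γm t) (γρ t) (γs t) i)
        + deriv γρ t * Dhρ H (γm t) (γρ t) (γs t)
        + deriv γs t * Dhs H (γm t) (γρ t) (γs t)) t := by
  have h : HasDerivAt (fun τ => H (γm τ) (γρ τ) (γs τ)) _ t := (hH.hasFDerivAt.comp_hasDerivAt t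
    (hm.hasDerivAt.prodMk (hρ.hasDerivAt.prodMk hs.hasDerivAt)) :)
  simp only [ContinuousLinearMap.apply_pi_prod_prod_eq_sum, ← Dhm_eq_fderiv hH,
    ← Dhρ_eq_fderiv hH, ← Dhs_eq_fderiv hH, deriv_pi (differentiableAt_pi.mp hm)] at h
  exact h

theorem contDiff_Dhm (hH : ContDiff ℝ 2 (fun p : (Fin n → ℝ) × ℝ × ℝ => H p.1 p.2.1 p.2.2))
    (i : Fin n) : ContDiff ℝ 1 (fun p : (Fin n → ℝ) × ℝ × ℝ => Dhm H p.1 p.2.1 p.2.2 i) := by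
  simp only [Dhm_eq_fderiv (hH.differentiable two_ne_zero _)]
  exact (hH.fderiv_right one_add_one_eq_two.le).clm_apply contDiff_const

theorem contDiff_Dhρ (hH : ContDiff ℝ 2 (fun p : (Fin n → ℝ) × ℝ × ℝ => H p.1 p.2.1 p.2.2)) :
    ContDiff ℝ 1 (fun p : (Fin n → ℝ) × ℝ × ℝ => Dhρ H p.1 p.2.1 p.2.2) := by
  simp only [Dhρ_eq_fderiv (hH.differentiable two_ne_zero _)]
  exact (hH.fderiv_right one_add_one_eq_two.le).clm_apply contDiff_const

theorem contDiff_Dhs (hH : ContDiff ℝ 2 (fun p : (Fin n → ℝ) × ℝ × ℝ => H p.1 p.2.1 p.2.2)) :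
    ContDiff ℝ 1 (fun p : (Fin n → ℝ) × ℝ × ℝ => Dhs H p.1 p.2.1 p.2.2) := by
  simp only [Dhs_eq_fderiv (hH.differentiable two_ne_zero _)]
  exact (hH.fderiv_right one_add_one_eq_two.le).clm_apply contDiff_const

end Partials

section ProductRule

variable {n : ℕ} {f g : (Fin n → ℝ) → ℝ} {x : Fin n → ℝ}

theorem pd_add (hf : DifferentiableAt ℝ f x) (hg : DifferentiableAt ℝ g x) (i : Fin n) :
    pd i (fun y => f y + g y) x = pd i f x + pd i g x := by
  simp [pd, fderiv_fun_add hf hg]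

theorem pd_mul (hf : DifferentiableAt ℝ f x) (hg : DifferentiableAt ℝ g x) (i : Fin n) :
    pd i (fun y => f y * g y) x = pd i f x * g x + f x * pd i g x := by
  simp only [pd, fderiv_fun_mul hf hg, add_apply, smul_apply, smul_eq_mul]
  ring

theorem pd_sum {ι : Type*} {F : ι → (Fin n → ℝ) → ℝ} (S : Finset ι)
    (hF : ∀ j ∈ S, DifferentiableAt ℝ (F j) x) (i : Fin n) :
    pd i (fun y => ∑ j ∈ S, F j y) x = ∑ j ∈ S, pd i (F j) x := by
  simp [pd, fderiv_fun_sum hF]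

theorem ContDiff.continuous_pd (hf : ContDiff ℝ 1 f) (i : Fin n) : Continuous (pd i f) :=
  (hf.continuous_fderiv one_ne_zero).clm_apply continuous_const

end ProductRule

section EnergyIdentity

variable {n : ℕ} {m u : (Fin n → ℝ) → Fin n → ℝ} {ρ s μ T : (Fin n → ℝ) → ℝ} {x : Fin n → ℝ}

theorem pd_energyFlux (hm : ∀ i, DifferentiableAt ℝ (fun y => m y i) x)
    (hu : ∀ i, DifferentiableAt ℝ (fun y => u y i) x)
    (hρ : DifferentiableAt ℝ ρ x) (hs : DifferentiableAt ℝ s x)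
    (hμ : DifferentiableAt ℝ μ x) (hT : DifferentiableAt ℝ T x) (c : Fin n) :
    pd c (fun y => ((∑ i, m y i * u y i) + ρ y * μ y + s y * T y) * u y c) x
      = (∑ i, (pd c (fun y => m y i) x * u x i + m x i * pd c (fun y => u y i) x)
          + (pd c ρ x * μ x + ρ x * pd c μ x) + (pd c s x * T x + s x * pd c T x)) * u x c
        + ((∑ i, m x i * u x i) + ρ x * μ x + s x * T x) * pd c (fun y => u y c) x := by
  have hmu : DifferentiableAt ℝ (fun y => ∑ i, m y i * u y i) x :=
    .fun_sum fun i _ => (hm i).fun_mul (hu i)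
  rw [pd_mul ((hmu.fun_add (hρ.fun_mul hμ)).fun_add (hs.fun_mul hT)) (hu c),
    pd_add (hmu.fun_add (hρ.fun_mul hμ)) (hs.fun_mul hT), pd_add hmu (hρ.fun_mul hμ),
    pd_sum _ fun i _ => (hm i).fun_mul (hu i), pd_mul hρ hμ, pd_mul hs hT,
    Finset.sum_congr rfl fun i _ => pd_mul (hm i) (hu i) c]

theorem lie_poisson_local_energy_balance
    (hm : ∀ i, DifferentiableAt ℝ (fun y => m y i) x)
    (hu : ∀ i, DifferentiableAt ℝ (fun y => u y i) x)
    (hρ : DifferentiableAt ℝ ρ x) (hs : DifferentiableAt ℝ s x)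
    (hμ : DifferentiableAt ℝ μ x) (hT : DifferentiableAt ℝ T x)
    {dm b : Fin n → ℝ} {dρ ds θρ θs : ℝ}
    (hmom : ∀ i, dm i + (∑ c, u x c * pd c (fun y => m y i) x)
      + (∑ c, m x c * pd i (fun y => u y c) x) + m x i * (∑ c, pd c (fun y => u y c) x)
      + ρ x * pd i μ x + s x * pd i T x = b i)
    (hmass : dρ + ∑ c, pd c (fun y => ρ y * u y c) x = θρ)
    (hent : ds + ∑ c, pd c (fun y => s y * u y c) x = θs) :
    (∑ i, dm i * u x i) + dρ * μ x + ds * T x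
      = (∑ i, b i * u x i) + θρ * μ x + θs * T x
        - ∑ c, pd c (fun y => ((∑ i, m y i * u y i) + ρ y * μ y + s y * T y) * u y c) x := by
  have hdm : ∀ i, dm i * u x i = (b i - (∑ c, u x c * pd c (fun y => m y i) x)
      - (∑ c, m x c * pd i (fun y => u y c) x) - m x i * (∑ c, pd c (fun y => u y c) x)
      - ρ x * pd i μ x - s x * pd i T x) * u x i := fun i => by
    rw [← hmom i]; ring
  simp only [fun c => pd_mul hρ (hu c) c, fun c => pd_mul hs (hu c) c] at hmass hent
  rw [Finset.sum_congr rfl fun i _ => hdm i,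
    Finset.sum_congr rfl fun c _ => pd_energyFlux hm hu hρ hs hμ hT c]
  linear_combination (norm := skip) μ x * hmass + T x * hent
  simp only [Finset.sum_add_distrib, Finset.sum_sub_distrib, Finset.sum_mul, Finset.mul_sum,
    add_mul, sub_mul, mul_add]
  ring_nf
  rw [Finset.sum_comm (f := fun i c => u x c * pd c (fun y => m y i) x * u x i),
    Finset.sum_comm (f := fun i c => m x i * pd c (fun y => u y c) x * u x i)]
  ring_nf
  simp only [mul_comm, neg_add_cancel]

end EnergyIdentity

theorem normal_flux_eq_neg_of_boundary_conditions {n : ℕ} {m u J ν : Fin n → ℝ}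
    {ρ s μ T jρ js : ℝ} (hJ : ∀ i, (∑ c, u c * ν c) * m i = -J i)
    (hρ : ρ * (∑ c, u c * ν c) = -jρ) (hs : s * (∑ c, u c * ν c) = -js) :
    ∑ c, ν c * (((∑ i, m i * u i) + ρ * μ + s * T) * u c)
      = -((∑ i, J i * u i) + jρ * μ + js * T) := by
  have hJu : ∀ i, m i * u i * ∑ c, u c * ν c = -(J i * u i) := fun i => by
    rw [← neg_mul, ← hJ i]; ring
  calc ∑ c, ν c * (((∑ i, m i * u i) + ρ * μ + s * T) * u c)
      = ((∑ i, m i * u i) + ρ * μ + s * T) * ∑ c, u c * ν c := by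
        rw [Finset.mul_sum]
        exact Finset.sum_congr rfl fun c _ => by ring
    _ = (∑ i, m i * u i * ∑ c, u c * ν c) + (ρ * ∑ c, u c * ν c) * μ
          + (s * ∑ c, u c * ν c) * T := by
        rw [add_mul, add_mul, Finset.sum_mul]
        ring
    _ = -((∑ i, J i * u i) + jρ * μ + js * T) := by
        rw [Finset.sum_congr rfl fun i _ => hJu i, Finset.sum_neg_distrib, hρ, hs]
        ring

section Fields

variable {n : ℕ} {H : (Fin n → ℝ) → ℝ → ℝ → ℝ} {m : ℝ → (Fin n → ℝ) → Fin n → ℝ}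
  {ρ s : ℝ → (Fin n → ℝ) → ℝ}

theorem contDiff_fields_at_time (hm : ∀ i, ContDiff ℝ 1 (fun p : ℝ × (Fin n → ℝ) => m p.1 p.2 i))
    (hρ : ContDiff ℝ 1 (fun p : ℝ × (Fin n → ℝ) => ρ p.1 p.2))
    (hs : ContDiff ℝ 1 (fun p : ℝ × (Fin n → ℝ) => s p.1 p.2)) (t : ℝ) :
    ContDiff ℝ 1 (fun y => (m t y, ρ t y, s t y)) :=
  ((contDiff_pi.mpr hm).prodMk (hρ.prodMk hs)).comp (contDiff_const.prodMk contDiff_id)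

theorem contDiff_energyFlux
    (hH : ContDiff ℝ 2 (fun p : (Fin n → ℝ) × ℝ × ℝ => H p.1 p.2.1 p.2.2))
    (hm : ∀ i, ContDiff ℝ 1 (fun p : ℝ × (Fin n → ℝ) => m p.1 p.2 i))
    (hρ : ContDiff ℝ 1 (fun p : ℝ × (Fin n → ℝ) => ρ p.1 p.2))
    (hs : ContDiff ℝ 1 (fun p : ℝ × (Fin n → ℝ) => s p.1 p.2)) (t : ℝ) :
    ContDiff ℝ 1 (fun y c =>
      ((∑ i, m t y i * Dhm H (m t y) (ρ t y) (s t y) i) + ρ t y * Dhρ H (m t y) (ρ t y) (s t y)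
        + s t y * Dhs H (m t y) (ρ t y) (s t y)) * Dhm H (m t y) (ρ t y) (s t y) c) := by
  have hslice : ContDiff ℝ 1 (fun y : Fin n → ℝ => (t, y)) := contDiff_const.prodMk contDiff_id
  have hfields := contDiff_fields_at_time hm hρ hs t
  have hu : ∀ i, ContDiff ℝ 1 (fun y => Dhm H (m t y) (ρ t y) (s t y) i) :=
    fun i => (contDiff_Dhm hH i).comp hfields
  refine contDiff_pi.mpr fun c => ContDiff.mul ?_ (hu c)
  exact ((ContDiff.sum fun i _ => ((hm i).comp hslice).mul (hu i)).add
    ((hρ.comp hslice).mul ((contDiff_Dhρ hH).comp hfields))).add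
    ((hs.comp hslice).mul ((contDiff_Dhs hH).comp hfields))

theorem deriv_hamiltonian_density_eq_source_sub_div
    (hH : ContDiff ℝ 2 (fun p : (Fin n → ℝ) × ℝ × ℝ => H p.1 p.2.1 p.2.2))
    (hm : ∀ i, ContDiff ℝ 1 (fun p : ℝ × (Fin n → ℝ) => m p.1 p.2 i))
    (hρ : ContDiff ℝ 1 (fun p : ℝ × (Fin n → ℝ) => ρ p.1 p.2))
    (hs : ContDiff ℝ 1 (fun p : ℝ × (Fin n → ℝ) => s p.1 p.2))
    {t : ℝ} {x b : Fin n → ℝ} {θρ θs : ℝ}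
    (hmom : ∀ i, deriv (fun τ => m τ x i) t
        + (∑ c, Dhm H (m t x) (ρ t x) (s t x) c * pd c (fun y => m t y i) x)
        + (∑ c, m t x c * pd i (fun y => Dhm H (m t y) (ρ t y) (s t y) c) x)
        + m t x i * (∑ c, pd c (fun y => Dhm H (m t y) (ρ t y) (s t y) c) x)
        + ρ t x * pd i (fun y => Dhρ H (m t y) (ρ t y) (s t y)) x
        + s t x * pd i (fun y => Dhs H (m t y) (ρ t y) (s t y)) x = b i)
    (hmass : deriv (fun τ => ρ τ x) t
        + ∑ c, pd c (fun y => ρ t y * Dhm H (m t y) (ρ t y) (s t y) c) x = θρ)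
    (hent : deriv (fun τ => s τ x) t
        + ∑ c, pd c (fun y => s t y * Dhm H (m t y) (ρ t y) (s t y) c) x = θs) :
    deriv (fun τ => H (m τ x) (ρ τ x) (s τ x)) t
      = (∑ i, b i * Dhm H (m t x) (ρ t x) (s t x) i) + θρ * Dhρ H (m t x) (ρ t x) (s t x)
          + θs * Dhs H (m t x) (ρ t x) (s t x)
        - ∑ c, pd c (fun y =>
            ((∑ i, m t y i * Dhm H (m t y) (ρ t y) (s t y) i)
              + ρ t y * Dhρ H (m t y) (ρ t y) (s t y) + s t y * Dhs H (m t y) (ρ t y) (s t y))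
            * Dhm H (m t y) (ρ t y) (s t y) c) x := by
  have htime : ContDiff ℝ 1 (fun τ : ℝ => (τ, x)) := contDiff_id.prodMk contDiff_const
  have hslice : ContDiff ℝ 1 (fun y : Fin n → ℝ => (t, y)) := contDiff_const.prodMk contDiff_id
  have hfields := contDiff_fields_at_time hm hρ hs t
  have hdiff {f : (Fin n → ℝ) → ℝ} (hf : ContDiff ℝ 1 f) : DifferentiableAt ℝ f x :=
    hf.differentiable one_ne_zero x
  rw [(hasDerivAt_comp_of_partials (γm := fun τ => m τ x) (γρ := fun τ => ρ τ x)
    (γs := fun τ => s τ x) (hH.differentiable two_ne_zero _)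
    (((contDiff_pi.mpr hm).comp htime).differentiable one_ne_zero t)
    ((hρ.comp htime).differentiable one_ne_zero t)
    ((hs.comp htime).differentiable one_ne_zero t)).deriv]
  exact lie_poisson_local_energy_balance (fun i => hdiff ((hm i).comp hslice))
    (fun i => hdiff ((contDiff_Dhm hH i).comp hfields)) (hdiff (hρ.comp hslice))
    (hdiff (hs.comp hslice)) (hdiff ((contDiff_Dhρ hH).comp hfields))
    (hdiff ((contDiff_Dhs hH).comp hfields)) hmom hmass hent

end Fields

theorem open_lie_poisson_energy_balance_general {n : ℕ}
    (Ω : Set (Fin n → ℝ)) (hΩm : MeasurableSet Ω)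
    (hΩc : IsCompact (closure Ω))
    (σ : Measure (Fin n → ℝ)) (nv : (Fin n → ℝ) → (Fin n → ℝ))
    (H : (Fin n → ℝ) → ℝ → ℝ → ℝ)
    (hH : ContDiff ℝ 2 (fun p : (Fin n → ℝ) × ℝ × ℝ => H p.1 p.2.1 p.2.2))
    (m b J : ℝ → (Fin n → ℝ) → (Fin n → ℝ))
    (ρ s θρ θs jρ js : ℝ → (Fin n → ℝ) → ℝ)
    (hm : ∀ i, ContDiff ℝ 1 (fun p : ℝ × (Fin n → ℝ) => m p.1 p.2 i))
    (hρ : ContDiff ℝ 1 (fun p : ℝ × (Fin n → ℝ) => ρ p.1 p.2))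
    (hs : ContDiff ℝ 1 (fun p : ℝ × (Fin n → ℝ) => s p.1 p.2))
    (hb : ∀ i, Continuous (fun p : ℝ × (Fin n → ℝ) => b p.1 p.2 i))
    (hθρ : Continuous (fun p : ℝ × (Fin n → ℝ) => θρ p.1 p.2))
    (hθs : Continuous (fun p : ℝ × (Fin n → ℝ) => θs p.1 p.2))
    (hdivthm : ∀ F : (Fin n → ℝ) → (Fin n → ℝ), ContDiff ℝ 1 F →
      ∫ x in Ω, ∑ i, pd i (fun y => F y i) x
        = ∫ x in frontier Ω, ∑ i, nv x i * F x i ∂σ)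
    (hmom : ∀ t, ∀ x ∈ Ω, ∀ i,
      deriv (fun τ => m τ x i) t
        + (∑ c, Dhm H (m t x) (ρ t x) (s t x) c * pd c (fun y => m t y i) x)
        + (∑ c, m t x c * pd i (fun y => Dhm H (m t y) (ρ t y) (s t y) c) x)
        + m t x i * (∑ c, pd c (fun y => Dhm H (m t y) (ρ t y) (s t y) c) x)
        + ρ t x * pd i (fun y => Dhρ H (m t y) (ρ t y) (s t y)) x
        + s t x * pd i (fun y => Dhs H (m t y) (ρ t y) (s t y)) x
      = b t x i)
    (hmass : ∀ t, ∀ x ∈ Ω,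
      deriv (fun τ => ρ τ x) t
        + ∑ c, pd c (fun y => ρ t y * Dhm H (m t y) (ρ t y) (s t y) c) x = θρ t x)
    (hent : ∀ t, ∀ x ∈ Ω,
      deriv (fun τ => s τ x) t
        + ∑ c, pd c (fun y => s t y * Dhm H (m t y) (ρ t y) (s t y) c) x = θs t x)
    (hbcJ : ∀ t, ∀ x ∈ frontier Ω, ∀ i,
      (∑ c, Dhm H (m t x) (ρ t x) (s t x) c * nv x c) * m t x i = -J t x i)
    (hbcρ : ∀ t, ∀ x ∈ frontier Ω,
      ρ t x * (∑ c, Dhm H (m t x) (ρ t x) (s t x) c * nv x c) = -jρ t x)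
    (hbcs : ∀ t, ∀ x ∈ frontier Ω,
      s t x * (∑ c, Dhm H (m t x) (ρ t x) (s t x) c * nv x c) = -js t x) :
    ∀ t, HasDerivAt (fun τ => ∫ x in Ω, H (m τ x) (ρ τ x) (s τ x))
      ((∫ x in Ω,
          (∑ i, b t x i * Dhm H (m t x) (ρ t x) (s t x) i)
            + θρ t x * Dhρ H (m t x) (ρ t x) (s t x)
            + θs t x * Dhs H (m t x) (ρ t x) (s t x))
        + ∫ x in frontier Ω,
            (∑ i, J t x i * Dhm H (m t x) (ρ t x) (s t x) i)
              + jρ t x * Dhρ H (m t x) (ρ t x) (s t x)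
              + js t x * Dhs H (m t x) (ρ t x) (s t x) ∂σ) t := by
  intro t
  have hflux := contDiff_energyFlux hH hm hρ hs t
  have hsource : Continuous fun x =>
      (∑ i, b t x i * Dhm H (m t x) (ρ t x) (s t x) i) + θρ t x * Dhρ H (m t x) (ρ t x) (s t x)
        + θs t x * Dhs H (m t x) (ρ t x) (s t x) := by
    have hfields := (contDiff_fields_at_time hm hρ hs t).continuous
    exact ((continuous_finsetSum _ fun i _ => ((hb i).comp (.prodMk_right t)).mul
      ((contDiff_Dhm hH i).continuous.comp hfields)).add
      ((hθρ.comp (.prodMk_right t)).mul ((contDiff_Dhρ hH).continuous.comp hfields))).add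
      ((hθs.comp (.prodMk_right t)).mul ((contDiff_Dhs hH).continuous.comp hfields))
  have hdiv := continuous_finsetSum Finset.univ fun c _ => (contDiff_pi.mp hflux c).continuous_pd c
  refine (hasDerivAt_setIntegral_of_contDiff
    (f := fun p => H (m p.1 p.2) (ρ p.1 p.2) (s p.1 p.2))
    ((hH.of_le one_le_two).comp ((contDiff_pi.mpr hm).prodMk (hρ.prodMk hs))) hΩm hΩc t
    ).congr_deriv ?_
  rw [setIntegral_congr_fun hΩm fun x hx => deriv_hamiltonian_density_eq_source_sub_div hH hm hρ hs
      (hmom t x hx) (hmass t x hx) (hent t x hx),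
    integral_sub ((hsource.continuousOn.integrableOn_compact hΩc).mono_set subset_closure)
      ((hdiv.continuousOn.integrableOn_compact hΩc).mono_set subset_closure),
    hdivthm _ hflux,
    setIntegral_congr_fun isClosed_frontier.measurableSet fun x hx =>
      normal_flux_eq_neg_of_boundary_conditions (μ := Dhρ H (m t x) (ρ t x) (s t x))
        (T := Dhs H (m t x) (ρ t x) (s t x)) (hbcJ t x hx) (hbcρ t x hx) (hbcs t x hx),
    integral_neg, sub_neg_eq_add]

/-- Energy (Hamiltonian) balance for the open Lie-Poisson system: if
`∂_t m + £_{∂𝔥/∂m} m + ρ∇(∂𝔥/∂ρ) + s∇(∂𝔥/∂s) = b`, `∂_t ρ + div(ρ ∂𝔥/∂m) = θ_ρ`,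
`∂_t s + div(s ∂𝔥/∂m) = θ_s` in `Ω`, with boundary conditions
`((∂𝔥/∂m)·n) m = −J`, `ρ(∂𝔥/∂m)·n = −j_ρ`, `s(∂𝔥/∂m)·n = −j_s` on `∂Ω`, then
`d/dt ∫_Ω 𝔥 dx = ∫_Ω (b·∂𝔥/∂m + θ_ρ ∂𝔥/∂ρ + θ_s ∂𝔥/∂s) dx
  + ∫_{∂Ω} (J·∂𝔥/∂m + j_ρ ∂𝔥/∂ρ + j_s ∂𝔥/∂s) da`. -/
theorem open_lie_poisson_energy_balance {n : ℕ}
    (Ω : Set (Fin n → ℝ)) (hΩo : IsOpen Ω) (hΩm : MeasurableSet Ω)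
    (hΩc : IsCompact (closure Ω))
    (σ : Measure (Fin n → ℝ)) (nv : (Fin n → ℝ) → (Fin n → ℝ))
    (H : (Fin n → ℝ) → ℝ → ℝ → ℝ)
    (hH : ContDiff ℝ 2 (fun p : (Fin n → ℝ) × ℝ × ℝ => H p.1 p.2.1 p.2.2))
    (m b J : ℝ → (Fin n → ℝ) → (Fin n → ℝ))
    (ρ s θρ θs jρ js : ℝ → (Fin n → ℝ) → ℝ)
    (hm : ∀ i, ContDiff ℝ 1 (fun p : ℝ × (Fin n → ℝ) => m p.1 p.2 i))
    (hρ : ContDiff ℝ 1 (fun p : ℝ × (Fin n → ℝ) => ρ p.1 p.2))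
    (hs : ContDiff ℝ 1 (fun p : ℝ × (Fin n → ℝ) => s p.1 p.2))
    (hb : ∀ i, Continuous (fun p : ℝ × (Fin n → ℝ) => b p.1 p.2 i))
    (hθρ : Continuous (fun p : ℝ × (Fin n → ℝ) => θρ p.1 p.2))
    (hθs : Continuous (fun p : ℝ × (Fin n → ℝ) => θs p.1 p.2))
    (hdivthm : ∀ F : (Fin n → ℝ) → (Fin n → ℝ), ContDiff ℝ 1 F →
      ∫ x in Ω, ∑ i, pd i (fun y => F y i) x
        = ∫ x in frontier Ω, ∑ i, nv x i * F x i ∂σ)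
    (hmom : ∀ t, ∀ x ∈ Ω, ∀ i,
      deriv (fun τ => m τ x i) t
        + (∑ c, Dhm H (m t x) (ρ t x) (s t x) c * pd c (fun y => m t y i) x)
        + (∑ c, m t x c * pd i (fun y => Dhm H (m t y) (ρ t y) (s t y) c) x)
        + m t x i * (∑ c, pd c (fun y => Dhm H (m t y) (ρ t y) (s t y) c) x)
        + ρ t x * pd i (fun y => Dhρ H (m t y) (ρ t y) (s t y)) x
        + s t x * pd i (fun y => Dhs H (m t y) (ρ t y) (s t y)) x
      = b t x i)
    (hmass : ∀ t, ∀ x ∈ Ω,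
      deriv (fun τ => ρ τ x) t
        + ∑ c, pd c (fun y => ρ t y * Dhm H (m t y) (ρ t y) (s t y) c) x = θρ t x)
    (hent : ∀ t, ∀ x ∈ Ω,
      deriv (fun τ => s τ x) t
        + ∑ c, pd c (fun y => s t y * Dhm H (m t y) (ρ t y) (s t y) c) x = θs t x)
    (hbcJ : ∀ t, ∀ x ∈ frontier Ω, ∀ i,
      (∑ c, Dhm H (m t x) (ρ t x) (s t x) c * nv x c) * m t x i = -J t x i)
    (hbcρ : ∀ t, ∀ x ∈ frontier Ω,
      ρ t x * (∑ c, Dhm H (m t x) (ρ t x) (s t x) c * nv x c) = -jρ t x)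
    (hbcs : ∀ t, ∀ x ∈ frontier Ω,
      s t x * (∑ c, Dhm H (m t x) (ρ t x) (s t x) c * nv x c) = -js t x) :
    ∀ t, HasDerivAt (fun τ => ∫ x in Ω, H (m τ x) (ρ τ x) (s τ x))
      ((∫ x in Ω,
          (∑ i, b t x i * Dhm H (m t x) (ρ t x) (s t x) i)
            + θρ t x * Dhρ H (m t x) (ρ t x) (s t x)
            + θs t x * Dhs H (m t x) (ρ t x) (s t x))
        + ∫ x in frontier Ω,
            (∑ i, J t x i * Dhm H (m t x) (ρ t x) (s t x) i)
              + jρ t x * Dhρ H (m t x) (ρ t x) (s t x)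
              + js t x * Dhs H (m t x) (ρ t x) (s t x) ∂σ) t :=
  open_lie_poisson_energy_balance_general Ω hΩm hΩc σ nv H hH m b J ρ s θρ θs jρ js hm hρ hs hb hθρ
    hθs hdivthm hmom hmass hent hbcJ hbcρ hbcs
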